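/- In the setting of the unitarily small convex hull: let ρ_n⁽⁰⁾, …, ρ_n⁽ˢ⁻¹⁾ be the half sums of noncompact positive roots for the s positive systems of Δ(g,t_f) containing the fixed Δ⁺(k,t_f), and let U be the convex hull of the union of the W(k,t_f)-orbits of these points. Then U is a W(k,t_f)-invariant compact convex polytope containing 0, and for every j, ρ_n⁽ʲ⁾ ∈ U while 2ρ_n⁽ʲ⁾ ∉ U whenever ρ_n⁽ʲ⁾ ≠ 0. -/

import Mathlib

open scoped InnerProductSpace

variable {V : Type*} [NormedAddCommGroup V] [InnerProductSpace ℝ V]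

/-- The pairing `⟨x, β^∨⟩ = 2⟨x,β⟩/⟨β,β⟩` of a vector with the coroot of `β`. -/
noncomputable def coPair (x β : V) : ℝ := 2 * ⟪x, β⟫_ℝ / ⟪β, β⟫_ℝ

/-- The reflection in the hyperplane orthogonal to `β`. -/
noncomputable def sRefl (β x : V) : V := x - coPair x β • β

/-- Apply the word `s_{Γ wₙ} ⋯ s_{Γ w₁}` to `x` (the first letter of the list acts first). -/
noncomputable def applyWord {l : ℕ} (Γ : Fin l → V) (w : List (Fin l)) (x : V) : V :=
  w.foldl (fun y i => sRefl (Γ i) y) x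

/-- A crystallographic root system together with a base (set of simple roots determining
a positive system). -/
structure RootBase (V : Type*) [NormedAddCommGroup V] [InnerProductSpace ℝ V] (l : ℕ) where
  Φ : Finset V
  simple : Fin l → V
  simple_mem : ∀ i, simple i ∈ Φ
  nonzero : ∀ α ∈ Φ, α ≠ 0
  neg_mem : ∀ α ∈ Φ, -α ∈ Φ
  refl_mem : ∀ α ∈ Φ, ∀ γ ∈ Φ, sRefl α γ ∈ Φ
  crystal : ∀ α ∈ Φ, ∀ γ ∈ Φ, ∃ n : ℤ, coPair γ α = (n : ℝ)
  pos_or_neg : ∀ α ∈ Φ, (∃ c : Fin l → ℕ, α = ∑ i, (c i : ℝ) • simple i) ∨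
      (∃ c : Fin l → ℕ, α = -∑ i, (c i : ℝ) • simple i)

namespace RootBase

variable {l : ℕ} (R : RootBase V l)

/-- The positive roots: the roots which are nonnegative integer combinations
of the simple roots. -/
noncomputable def Pos : Finset V :=
  @Finset.filter V (fun α => ∃ c : Fin l → ℕ, α = ∑ i, (c i : ℝ) • R.simple i)
    (Classical.decPred _) R.Φ

/-- Half the sum of the positive roots. -/
noncomputable def rho : V := (2⁻¹ : ℝ) • ∑ α ∈ R.Pos, α

/-- A vector is dominant if it pairs nonnegatively with every simple coroot. -/
def IsDominant (x : V) : Prop := ∀ i, 0 ≤ coPair x (R.simple i)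

/-- A run of the negative index algorithm starting at `η`: at each step the chosen
simple root has strictly negative pairing with the current vector. -/
def ValidRun (η : V) (w : List (Fin l)) : Prop :=
  ∀ k : Fin w.length, coPair (applyWord R.simple (w.take k) η) (R.simple (w.get k)) < 0

end RootBase

/-- `P` is a positive system for the finite root system `Φ`. -/
def IsPosSystem {V : Type*} [NormedAddCommGroup V] [InnerProductSpace ℝ V]
    (Φ P : Finset V) : Prop :=
  P ⊆ Φ ∧ (∀ α ∈ Φ, (α ∈ P ↔ -α ∉ P)) ∧
    ∀ α ∈ P, ∀ β ∈ P, α + β ∈ Φ → α + β ∈ P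

lemma coPair_add (x y β : V) : coPair (x + y) β = coPair x β + coPair y β := by
  unfold coPair; rw [inner_add_left]; ring

lemma coPair_smul (c : ℝ) (x β : V) : coPair (c • x) β = c * coPair x β := by
  unfold coPair; rw [real_inner_smul_left]; ring

lemma coPair_sub (x y β : V) : coPair (x - y) β = coPair x β - coPair y β := by
  unfold coPair; rw [inner_sub_left]; ring

lemma coPair_neg (x β : V) : coPair (-x) β = - coPair x β := by
  unfold coPair; rw [inner_neg_left]; ring

lemma coPair_self (β : V) (hβ : β ≠ 0) : coPair β β = 2 := by
  unfold coPair
  have h : ⟪β, β⟫_ℝ ≠ 0 := fun h => hβ (by simpa using inner_self_eq_zero.mp h)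
  field_simp

lemma sRefl_add (β x y : V) : sRefl β (x + y) = sRefl β x + sRefl β y := by
  unfold sRefl; rw [coPair_add, add_smul]; abel

lemma sRefl_smul (β : V) (c : ℝ) (x : V) : sRefl β (c • x) = c • sRefl β x := by
  unfold sRefl; rw [coPair_smul, smul_sub, smul_smul]

lemma sRefl_neg (β x : V) : sRefl β (-x) = - sRefl β x := by
  unfold sRefl; rw [coPair_neg, neg_smul]; abel

lemma sRefl_sRefl (β x : V) : sRefl β (sRefl β x) = x := by
  by_cases hβ : β = 0
  · subst hβ
    simp [sRefl, coPair]
  · unfold sRefl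
    rw [coPair_sub, coPair_smul, coPair_self β hβ]
    have : coPair x β - coPair x β * 2 = - coPair x β := by ring
    rw [this, neg_smul]
    abel

lemma sRefl_self (β : V) (hβ : β ≠ 0) : sRefl β β = -β := by
  unfold sRefl; rw [coPair_self β hβ, two_smul]; abel

lemma sRefl_adjoint (β x y : V) : ⟪sRefl β x, y⟫_ℝ = ⟪x, sRefl β y⟫_ℝ := by
  unfold sRefl coPair
  rw [inner_sub_left, inner_sub_right, real_inner_smul_left, real_inner_smul_right]
  rw [real_inner_comm y β]
  ring

noncomputable def sReflL (β : V) : V →ₗ[ℝ] V where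
  toFun := sRefl β
  map_add' := sRefl_add β
  map_smul' := sRefl_smul β

variable {l : ℕ}

lemma applyWord_nil (Γ : Fin l → V) (x : V) : applyWord Γ [] x = x := rfl

lemma applyWord_cons (Γ : Fin l → V) (i : Fin l) (w : List (Fin l)) (x : V) :
    applyWord Γ (i :: w) x = applyWord Γ w (sRefl (Γ i) x) := rfl

lemma applyWord_append (Γ : Fin l → V) (w₁ w₂ : List (Fin l)) (x : V) :
    applyWord Γ (w₁ ++ w₂) x = applyWord Γ w₂ (applyWord Γ w₁ x) :=
  List.foldl_append

lemma applyWord_singleton (Γ : Fin l → V) (i : Fin l) (x : V) :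
    applyWord Γ [i] x = sRefl (Γ i) x := rfl

noncomputable def wordL (Γ : Fin l → V) (w : List (Fin l)) : V →ₗ[ℝ] V :=
  w.foldl (fun A i => (sReflL (Γ i)).comp A) LinearMap.id

lemma wordL_apply_gen (Γ : Fin l → V) (w : List (Fin l)) :
    ∀ (A : V →ₗ[ℝ] V) (x : V),
      (w.foldl (fun A i => (sReflL (Γ i)).comp A) A) x = applyWord Γ w (A x) := by
  induction w with
  | nil => intro A x; rfl
  | cons i t ih =>
    intro A x
    show (t.foldl (fun A i => (sReflL (Γ i)).comp A) ((sReflL (Γ i)).comp A)) x = _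
    rw [ih]
    rfl

lemma wordL_apply (Γ : Fin l → V) (w : List (Fin l)) (x : V) :
    wordL Γ w x = applyWord Γ w x := by
  simpa [wordL] using wordL_apply_gen Γ w LinearMap.id x

lemma applyWord_add (Γ : Fin l → V) (w : List (Fin l)) (x y : V) :
    applyWord Γ w (x + y) = applyWord Γ w x + applyWord Γ w y := by
  rw [← wordL_apply, ← wordL_apply, ← wordL_apply, map_add]

lemma applyWord_smul (Γ : Fin l → V) (w : List (Fin l)) (c : ℝ) (x : V) :
    applyWord Γ w (c • x) = c • applyWord Γ w x := by
  rw [← wordL_apply, ← wordL_apply, map_smul]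

lemma applyWord_neg (Γ : Fin l → V) (w : List (Fin l)) (x : V) :
    applyWord Γ w (-x) = - applyWord Γ w x := by
  rw [← wordL_apply, ← wordL_apply, map_neg]

lemma applyWord_sum (Γ : Fin l → V) (w : List (Fin l)) {ι : Type*} (A : Finset ι) (f : ι → V) :
    applyWord Γ w (∑ a ∈ A, f a) = ∑ a ∈ A, applyWord Γ w (f a) := by
  rw [← wordL_apply, map_sum]
  simp [wordL_apply]

lemma applyWord_reverse_inv (Γ : Fin l → V) (w : List (Fin l)) (x : V) :
    applyWord Γ w.reverse (applyWord Γ w x) = x := by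
  induction w generalizing x with
  | nil => rfl
  | cons i t ih =>
    rw [applyWord_cons, List.reverse_cons, applyWord_append, ih, applyWord_singleton,
      sRefl_sRefl]

lemma applyWord_inv_reverse (Γ : Fin l → V) (w : List (Fin l)) (x : V) :
    applyWord Γ w (applyWord Γ w.reverse x) = x := by
  have := applyWord_reverse_inv Γ w.reverse x
  rwa [List.reverse_reverse] at this

lemma applyWord_adjoint (Γ : Fin l → V) (w : List (Fin l)) (x y : V) :
    ⟪applyWord Γ w x, y⟫_ℝ = ⟪x, applyWord Γ w.reverse y⟫_ℝ := by
  induction w generalizing x y with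
  | nil => rfl
  | cons i t ih =>
    rw [applyWord_cons, ih, List.reverse_cons, applyWord_append, applyWord_singleton,
      sRefl_adjoint]

lemma applyWord_adjoint' (Γ : Fin l → V) (w : List (Fin l)) (x y : V) :
    ⟪x, applyWord Γ w y⟫_ℝ = ⟪applyWord Γ w.reverse x, y⟫_ℝ := by
  rw [applyWord_adjoint, List.reverse_reverse]

lemma inner_self_pos' {x : V} (hx : x ≠ 0) : (0:ℝ) < ⟪x, x⟫_ℝ :=
  lt_of_le_of_ne real_inner_self_nonneg (Ne.symm (inner_self_ne_zero.mpr hx))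
section
variable (Φ : Finset V)

/-- strict Cauchy-Schwarz for non-parallel vectors -/
lemma strictCS {α γ : V} (hα : α ≠ 0) (hnp : ¬ ∃ r : ℝ, γ = r • α) :
    ⟪α, γ⟫_ℝ ^ 2 < ⟪α, α⟫_ℝ * ⟪γ, γ⟫_ℝ := by
  have haa : (0:ℝ) < ⟪α, α⟫_ℝ := inner_self_pos' hα
  set t : ℝ := ⟪α, γ⟫_ℝ / ⟪α, α⟫_ℝ with ht
  have hδ : γ - t • α ≠ 0 := by
    intro h
    exact hnp ⟨t, by rw [sub_eq_zero] at h; exact h⟩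
  have h0 : (0:ℝ) < ⟪γ - t • α, γ - t • α⟫_ℝ := inner_self_pos' hδ
  have hexp : ⟪γ - t • α, γ - t • α⟫_ℝ
      = ⟪γ, γ⟫_ℝ - 2 * t * ⟪α, γ⟫_ℝ + t ^ 2 * ⟪α, α⟫_ℝ := by
    rw [real_inner_sub_sub_self, real_inner_smul_right, real_inner_smul_left,
      real_inner_smul_right, real_inner_comm γ α]
    ring
  rw [hexp, ht] at h0
  have h1 : (0:ℝ) < (⟪γ, γ⟫_ℝ * ⟪α, α⟫_ℝ - ⟪α, γ⟫_ℝ ^ 2) / ⟪α, α⟫_ℝ := by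
    have : ⟪γ, γ⟫_ℝ - 2 * (⟪α, γ⟫_ℝ / ⟪α, α⟫_ℝ) * ⟪α, γ⟫_ℝ
        + (⟪α, γ⟫_ℝ / ⟪α, α⟫_ℝ) ^ 2 * ⟪α, α⟫_ℝ
        = (⟪γ, γ⟫_ℝ * ⟪α, α⟫_ℝ - ⟪α, γ⟫_ℝ ^ 2) / ⟪α, α⟫_ℝ := by
      field_simp
      ring
    linarith [this ▸ h0]
  have h2 := mul_pos h1 haa
  rw [div_mul_cancel₀ _ (ne_of_gt haa)] at h2
  linarith

end

section RootLemmas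
variable (Φ : Finset V)
variable (hnz : ∀ α ∈ Φ, α ≠ 0) (hneg : ∀ α ∈ Φ, -α ∈ Φ)
variable (hrefl : ∀ α ∈ Φ, ∀ γ ∈ Φ, sRefl α γ ∈ Φ)
variable (hcrys : ∀ α ∈ Φ, ∀ γ ∈ Φ, ∃ n : ℤ, coPair γ α = (n : ℝ))

include hnz hneg hrefl hcrys in
lemma addRoot {α γ : V} (hαΦ : α ∈ Φ) (hγΦ : γ ∈ Φ) (hne : α ≠ -γ)
    (hip : ⟪α, γ⟫_ℝ < 0) : α + γ ∈ Φ := by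
  have hα0 := hnz α hαΦ
  have hγ0 := hnz γ hγΦ
  have haa := inner_self_pos' hα0
  have hgg := inner_self_pos' hγ0
  by_cases hpar : ∃ r : ℝ, γ = r • α
  · obtain ⟨r, hr⟩ := hpar
    have hr0 : r ≠ 0 := by rintro rfl; simp at hr; exact hγ0 hr
    have hipr : ⟪α, γ⟫_ℝ = r * ⟪α, α⟫_ℝ := by rw [hr, real_inner_smul_right]
    have hrneg : r < 0 := by nlinarith
    obtain ⟨n, hn⟩ := hcrys α hαΦ γ hγΦ
    have h2r : coPair γ α = 2 * r := by
      unfold coPair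
      rw [hr, real_inner_smul_left]
      field_simp
    obtain ⟨m, hm⟩ := hcrys γ hγΦ α hαΦ
    have h2or : coPair α γ = 2 / r := by
      unfold coPair
      rw [hr]
      simp only [real_inner_smul_left, real_inner_smul_right]
      rw [real_inner_comm α]
      field_simp
    have hnm : (n : ℝ) * m = 4 := by
      rw [← hn, ← hm, h2r, h2or]
      field_simp
      ring
    have hnm' : n * m = 4 := by exact_mod_cast hnm
    have hnneg : n < 0 := by
      have : (n : ℝ) < 0 := by rw [← hn, h2r]; linarith
      exact_mod_cast this
    have hmneg : m < 0 := by
      have : (m : ℝ) < 0 := by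
        rw [← hm, h2or]
        exact div_neg_of_pos_of_neg two_pos hrneg
      exact_mod_cast this
    have hn4 : -4 ≤ n := by nlinarith
    have hcase : n = -1 ∨ n = -2 ∨ n = -4 := by interval_cases n <;> omega
    have hrn : 2 * r = (n : ℝ) := by rw [← hn, h2r]
    rcases hcase with h | h | h
    · have hrv : r = -(1/2) := by rw [h] at hrn; push_cast at hrn; linarith
      have : α + γ = -γ := by rw [hr, hrv]; module
      rw [this]; exact hneg γ hγΦ
    · exfalso
      have hrv : r = -1 := by rw [h] at hrn; push_cast at hrn; linarith
      exact hne (by rw [hr, hrv]; module)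
    · have hrv : r = -2 := by rw [h] at hrn; push_cast at hrn; linarith
      have : α + γ = -α := by rw [hr, hrv]; module
      rw [this]; exact hneg α hαΦ
  · obtain ⟨n, hn⟩ := hcrys α hαΦ γ hγΦ
    obtain ⟨m, hm⟩ := hcrys γ hγΦ α hαΦ
    have hm_neg : coPair α γ < 0 :=
      div_neg_of_neg_of_pos (by linarith) hgg
    have hn_neg : coPair γ α < 0 :=
      div_neg_of_neg_of_pos (by rw [real_inner_comm]; linarith) haa
    have hprod : coPair α γ * coPair γ α < 4 := by
      have hcs := strictCS hα0 hpar
      unfold coPair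
      rw [real_inner_comm γ α, div_mul_div_comm]
      rw [div_lt_iff₀ (mul_pos hgg haa)]
      nlinarith [hcs, (real_inner_comm α γ : ⟪γ,α⟫_ℝ = ⟪α,γ⟫_ℝ)]
    have hmZ : m < 0 := by
      have : (m : ℝ) < 0 := hm ▸ hm_neg
      exact_mod_cast this
    have hnZ : n < 0 := by
      have : (n : ℝ) < 0 := hn ▸ hn_neg
      exact_mod_cast this
    have hprodZ : m * n < 4 := by
      have : (m : ℝ) * n < 4 := by rw [← hm, ← hn]; exact hprod
      exact_mod_cast this
    have hcase : m = -1 ∨ n = -1 := by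
      by_contra hcon
      push_neg at hcon
      have h1 : m ≤ -2 := by omega
      have h2 : n ≤ -2 := by omega
      nlinarith
    rcases hcase with h | h
    · have hs := hrefl γ hγΦ α hαΦ
      have heq : sRefl γ α = α + γ := by
        unfold sRefl
        rw [hm, h]
        push_cast
        module
      rwa [heq] at hs
    · have hs := hrefl α hαΦ γ hγΦ
      have heq : sRefl α γ = α + γ := by
        unfold sRefl
        rw [hn, h]
        push_cast
        module
      rwa [heq] at hs

end RootLemmas

section PosLemmas
variable (Φ : Finset V)
variable (hnz : ∀ α ∈ Φ, α ≠ 0) (hneg : ∀ α ∈ Φ, -α ∈ Φ)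
variable (hrefl : ∀ α ∈ Φ, ∀ γ ∈ Φ, sRefl α γ ∈ Φ)
variable (hcrys : ∀ α ∈ Φ, ∀ γ ∈ Φ, ∃ n : ℤ, coPair γ α = (n : ℝ))

include hnz hneg hrefl hcrys in
lemma posPair {P : Finset V} (hP : IsPosSystem Φ P) {γ β : V} (hγ : γ ∈ P) (hβ : β ∈ P)
    (hout : sRefl γ β ∉ P) : 0 < ⟪β, γ⟫_ℝ := by
  have hγΦ := hP.1 hγ
  have hβΦ := hP.1 hβ
  have hγ0 := hnz _ hγΦ
  have hβ0 := hnz _ hβΦ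
  have hgg := inner_self_pos' hγ0
  have hbb := inner_self_pos' hβ0
  have hgg0 : ⟪γ, γ⟫_ℝ ≠ 0 := ne_of_gt hgg
  by_contra hle
  push_neg at hle
  obtain ⟨z, hz⟩ := hcrys γ hγΦ β hβΦ
  have h2X : 2 * ⟪β, γ⟫_ℝ = (z : ℝ) * ⟪γ, γ⟫_ℝ := by
    have h := (div_eq_iff hgg0).mp hz
    linarith [h]
  have hzle : z ≤ 0 := by
    have hzr : (z : ℝ) ≤ 0 := by nlinarith
    exact_mod_cast hzr
  rcases eq_or_lt_of_le hzle with hz0 | hzlt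
  · -- z = 0 : sRefl γ β = β ∈ P, contradiction
    apply hout
    have heq : sRefl γ β = β := by
      unfold sRefl
      rw [hz, hz0]
      simp
    rwa [heq]
  · -- z ≤ -1
    have hXneg : ⟪β, γ⟫_ℝ < 0 := by
      have hzr : (z : ℝ) < 0 := by exact_mod_cast hzlt
      nlinarith [mul_neg_of_neg_of_pos hzr hgg]
    by_cases hpar : ∃ r : ℝ, β = r • γ
    · obtain ⟨r, hr⟩ := hpar
      have hr0 : r ≠ 0 := by rintro rfl; simp at hr; exact hβ0 hr
      have hipr : ⟪β, γ⟫_ℝ = r * ⟪γ, γ⟫_ℝ := by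
        rw [hr, real_inner_smul_left]
      have hrneg : r < 0 := by nlinarith
      -- z = 2r
      have h2r : (z : ℝ) = 2 * r := by
        rw [← hz]
        unfold coPair
        rw [hipr]
        field_simp
      obtain ⟨m, hm⟩ := hcrys β hβΦ γ hγΦ
      have h2or : (m : ℝ) = 2 / r := by
        rw [← hm]
        unfold coPair
        rw [hr]
        simp only [real_inner_smul_left, real_inner_smul_right]
        rw [real_inner_comm γ]
        field_simp
      have hnm : z * m = 4 := by
        have : (z : ℝ) * m = 4 := by rw [h2r, h2or]; field_simp; ring
        exact_mod_cast this
      have hmneg : m < 0 := by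
        have : (m : ℝ) < 0 := by rw [h2or]; exact div_neg_of_pos_of_neg two_pos hrneg
        exact_mod_cast this
      have hz4 : -4 ≤ z := by nlinarith
      have hcase : z = -1 ∨ z = -2 ∨ z = -4 := by interval_cases z <;> omega
      rcases hcase with h | h | h
      · -- r = -1/2 : β + γ = -β ∈ P contradicts β ∈ P
        have hrv : r = -(1/2) := by rw [h] at h2r; push_cast at h2r; linarith
        have hsum : β + γ = -β := by rw [hr, hrv]; module
        have hroot : β + γ ∈ Φ := by rw [hsum]; exact hneg β hβΦ
        have hmem : β + γ ∈ P := hP.2.2 β hβ γ hγ hroot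
        rw [hsum] at hmem
        exact (hP.2.1 β hβΦ).mp hβ hmem
      · -- r = -1 : β = -γ contradicts γ ∈ P
        have hrv : r = -1 := by rw [h] at h2r; push_cast at h2r; linarith
        have : β = -γ := by rw [hr, hrv]; module
        rw [this] at hβ
        exact (hP.2.1 γ hγΦ).mp hγ hβ
      · -- r = -2 : β + γ = -γ ∈ P contradicts γ ∈ P
        have hrv : r = -2 := by rw [h] at h2r; push_cast at h2r; linarith
        have hsum : β + γ = -γ := by rw [hr, hrv]; module
        have hroot : β + γ ∈ Φ := by rw [hsum]; exact hneg γ hγΦ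
        have hmem : β + γ ∈ P := hP.2.2 β hβ γ hγ hroot
        rw [hsum] at hmem
        exact (hP.2.1 γ hγΦ).mp hγ hmem
    · -- nonparallel
      obtain ⟨m, hm⟩ := hcrys β hβΦ γ hγΦ
      have hmneg : m < 0 := by
        have : (m : ℝ) < 0 := by
          rw [← hm]
          exact div_neg_of_neg_of_pos
            (by rw [real_inner_comm]; linarith) hbb
        exact_mod_cast this
      have hprod : (z : ℝ) * m < 4 := by
        rw [← hz, ← hm]
        have hcs := strictCS hγ0 hpar
        unfold coPair
        rw [div_mul_div_comm, div_lt_iff₀ (mul_pos hgg hbb)]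
        nlinarith [hcs, (real_inner_comm γ β : ⟪β,γ⟫_ℝ = ⟪γ,β⟫_ℝ)]
      have hprodZ : z * m < 4 := by exact_mod_cast hprod
      have hz3 : -3 ≤ z := by nlinarith
      have hcase : z = -1 ∨ z = -2 ∨ z = -3 := by omega
      have hsharp : sRefl γ β = β - (z : ℝ) • γ := by unfold sRefl; rw [hz]
      have hsβΦ : β - (z : ℝ) • γ ∈ Φ := by rw [← hsharp]; exact hrefl γ hγΦ β hβΦ
      have hnegγΦ : -γ ∈ Φ := hneg γ hγΦ
      rcases hcase with h | h | h
      · -- z = -1 : sβ = β + γ ∈ P by closure, contradiction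
        apply hout
        have h1 : sRefl γ β = β + γ := by rw [hsharp, h]; push_cast; module
        have hroot : β + γ ∈ Φ := by rw [← h1]; exact hrefl γ hγΦ β hβΦ
        rw [h1]
        exact hP.2.2 β hβ γ hγ hroot
      · -- z = -2
        have hX : ⟪β, γ⟫_ℝ = - ⟪γ, γ⟫_ℝ := by rw [h] at h2X; push_cast at h2X; linarith
        have hδΦ : β + (2:ℝ) • γ ∈ Φ := by
          have : β - (z:ℝ) • γ = β + (2:ℝ) • γ := by rw [h]; push_cast; module
          rwa [this] at hsβΦ
        have hne1 : β + (2:ℝ) • γ ≠ -(-γ) := by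
          intro hcon
          rw [neg_neg] at hcon
          exact hpar ⟨-1, by rw [eq_sub_of_add_eq hcon]; module⟩
        have hip1 : ⟪β + (2:ℝ) • γ, -γ⟫_ℝ < 0 := by
          rw [inner_neg_right, inner_add_left, real_inner_smul_left]
          rw [hX]
          nlinarith
        have hadd1 := addRoot Φ hnz hneg hrefl hcrys hδΦ hnegγΦ hne1 hip1
        have hbg : β + γ ∈ Φ := by
          have : β + (2:ℝ) • γ + -γ = β + γ := by module
          rwa [this] at hadd1
        have hbgP : β + γ ∈ P := hP.2.2 β hβ γ hγ hbg
        have hb2gΦ : β + γ + γ ∈ Φ := by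
          have : β + γ + γ = β + (2:ℝ) • γ := by module
          rwa [this]
        have hb2gP : β + γ + γ ∈ P := hP.2.2 _ hbgP γ hγ hb2gΦ
        apply hout
        have : sRefl γ β = β + γ + γ := by rw [hsharp, h]; push_cast; module
        rwa [this]
      · -- z = -3
        have hX : 2 * ⟪β, γ⟫_ℝ = -3 * ⟪γ, γ⟫_ℝ := by rw [h] at h2X; push_cast at h2X; linarith
        have hδΦ : β + (3:ℝ) • γ ∈ Φ := by
          have : β - (z:ℝ) • γ = β + (3:ℝ) • γ := by rw [h]; push_cast; module
          rwa [this] at hsβΦ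
        have hne1 : β + (3:ℝ) • γ ≠ -(-γ) := by
          intro hcon
          rw [neg_neg] at hcon
          exact hpar ⟨-2, by rw [eq_sub_of_add_eq hcon]; module⟩
        have hip1 : ⟪β + (3:ℝ) • γ, -γ⟫_ℝ < 0 := by
          rw [inner_neg_right, inner_add_left, real_inner_smul_left]
          nlinarith
        have hadd1 := addRoot Φ hnz hneg hrefl hcrys hδΦ hnegγΦ hne1 hip1
        have hδ2Φ : β + (2:ℝ) • γ ∈ Φ := by
          have : β + (3:ℝ) • γ + -γ = β + (2:ℝ) • γ := by module
          rwa [this] at hadd1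
        have hne2 : β + (2:ℝ) • γ ≠ -(-γ) := by
          intro hcon
          rw [neg_neg] at hcon
          exact hpar ⟨-1, by rw [eq_sub_of_add_eq hcon]; module⟩
        have hip2 : ⟪β + (2:ℝ) • γ, -γ⟫_ℝ < 0 := by
          rw [inner_neg_right, inner_add_left, real_inner_smul_left]
          nlinarith
        have hadd2 := addRoot Φ hnz hneg hrefl hcrys hδ2Φ hnegγΦ hne2 hip2
        have hbg : β + γ ∈ Φ := by
          have : β + (2:ℝ) • γ + -γ = β + γ := by module
          rwa [this] at hadd2
        have hbgP : β + γ ∈ P := hP.2.2 β hβ γ hγ hbg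
        have hb2gΦ : β + γ + γ ∈ Φ := by
          have : β + γ + γ = β + (2:ℝ) • γ := by module
          rwa [this]
        have hb2gP : β + γ + γ ∈ P := hP.2.2 _ hbgP γ hγ hb2gΦ
        have hb3gΦ : β + γ + γ + γ ∈ Φ := by
          have : β + γ + γ + γ = β + (3:ℝ) • γ := by module
          rwa [this]
        have hb3gP : β + γ + γ + γ ∈ P := hP.2.2 _ hb2gP γ hγ hb3gΦ
        apply hout
        have : sRefl γ β = β + γ + γ + γ := by rw [hsharp, h]; push_cast; module
        rwa [this]

end PosLemmas

section ImagePos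
variable [DecidableEq V]
variable (Φ : Finset V) (f g : V → V)
variable (hfg : ∀ x, f (g x) = x) (hgf : ∀ x, g (f x) = x)
variable (hfadd : ∀ x y, f (x + y) = f x + f y) (hfneg : ∀ x, f (-x) = - f x)
variable (hfΦ : ∀ α ∈ Φ, f α ∈ Φ) (hgΦ : ∀ α ∈ Φ, g α ∈ Φ)

include hgf in
lemma mem_image_inv (Q : Finset V) (α : V) (hα : α ∈ Q.image f) : g α ∈ Q := by
  obtain ⟨a, ha, rfl⟩ := Finset.mem_image.mp hα
  rwa [hgf]

include hfg hgf hfadd hfneg hfΦ hgΦ in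
lemma isPos_image {Q : Finset V} (hQ : IsPosSystem Φ Q) : IsPosSystem Φ (Q.image f) := by
  have hgneg : ∀ x, g (-x) = - g x := by
    intro x
    have h1 : g (-x) = g (- f (g x)) := by rw [hfg]
    rw [h1, ← hfneg, hgf]
  refine ⟨?_, ?_, ?_⟩
  · intro α hα
    obtain ⟨a, ha, rfl⟩ := Finset.mem_image.mp hα
    exact hfΦ a (hQ.1 ha)
  · intro α hαΦ
    constructor
    · intro hm hneg'
      have h1 : g α ∈ Q := mem_image_inv f g hgf Q α hm
      have h2 : g (-α) ∈ Q := mem_image_inv f g hgf Q (-α) hneg'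
      rw [hgneg] at h2
      exact (hQ.2.1 (g α) (hQ.1 h1)).mp h1 h2
    · intro hm
      by_contra hcon
      have h1 : g (-α) ∉ Q := fun h => hm (Finset.mem_image.mpr ⟨g (-α), h, hfg _⟩)
      rw [hgneg] at h1
      have hgαΦ : g α ∈ Φ := hgΦ α hαΦ
      have h2 : g α ∈ Q := by
        by_contra h3
        exact h3 ((hQ.2.1 (g α) hgαΦ).mpr h1)
      exact hcon (Finset.mem_image.mpr ⟨g α, h2, hfg α⟩)
  · intro α hα β hβ hsum
    have ha : g α ∈ Q := mem_image_inv f g hgf Q α hα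
    have hb : g β ∈ Q := mem_image_inv f g hgf Q β hβ
    have hgadd : g (α + β) = g α + g β := by
      have : α + β = f (g α) + f (g β) := by rw [hfg, hfg]
      rw [this, ← hfadd, hgf]
    have hsum' : g α + g β ∈ Φ := by rw [← hgadd]; exact hgΦ _ hsum
    have : g α + g β ∈ Q := hQ.2.2 _ ha _ hb hsum'
    refine Finset.mem_image.mpr ⟨g α + g β, this, ?_⟩
    rw [← hgadd, hfg]

include hfg hgf hfadd in
lemma sum_image_f (Q : Finset V) : ∑ α ∈ Q.image f, α = f (∑ α ∈ Q, α) := by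
  have hinj : ∀ x ∈ Q, ∀ y ∈ Q, f x = f y → x = y := by
    intro x _ y _ h
    have := congrArg g h
    rwa [hgf, hgf] at this
  have hzero : f 0 = 0 := by
    have h := hfadd 0 0
    rw [add_zero] at h
    exact left_eq_add.mp h
  have hmap : ∀ (s : Finset V), f (∑ α ∈ s, α) = ∑ α ∈ s, f α := by
    intro s
    induction s using Finset.cons_induction with
    | empty => simpa using hzero
    | cons a t ha ih => rw [Finset.sum_cons, Finset.sum_cons, hfadd, ih]
  rw [Finset.sum_image hinj, hmap]

end ImagePos

section Reg
variable [DecidableEq V]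
variable (Φ : Finset V)
variable (hnz : ∀ α ∈ Φ, α ≠ 0) (hneg : ∀ α ∈ Φ, -α ∈ Φ)
variable (hrefl : ∀ α ∈ Φ, ∀ γ ∈ Φ, sRefl α γ ∈ Φ)
variable (hcrys : ∀ α ∈ Φ, ∀ γ ∈ Φ, ∃ n : ℤ, coPair γ α = (n : ℝ))

include hnz hneg hrefl hcrys in
/-- Key regularity: every positive root pairs positively with the sum of positive roots. -/
lemma reg {P : Finset V} (hP : IsPosSystem Φ P) {γ : V} (hγ : γ ∈ P) :
    0 < ⟪γ, ∑ β ∈ P, β⟫_ℝ := by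
  classical
  have hγΦ := hP.1 hγ
  have hγ0 := hnz _ hγΦ
  set σ := ∑ β ∈ P, β with hσ
  set P' := P.image (sRefl γ) with hP'
  -- P' is a positive system
  have hP'pos : IsPosSystem Φ P' :=
    isPos_image Φ (sRefl γ) (sRefl γ) (sRefl_sRefl γ) (sRefl_sRefl γ)
      (sRefl_add γ) (sRefl_neg γ)
      (fun α hα => hrefl γ hγΦ α hα) (fun α hα => hrefl γ hγΦ α hα) hP
  have hσ' : ∑ β ∈ P', β = sRefl γ σ :=
    sum_image_f (sRefl γ) (sRefl γ) (sRefl_sRefl γ) (sRefl_sRefl γ) (sRefl_add γ) P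
  set D := P \ P' with hD
  -- each element of D pairs positively with γ
  have hDpos : ∀ β ∈ D, 0 < ⟪β, γ⟫_ℝ := by
    intro β hβ
    obtain ⟨hβP, hβP'⟩ := Finset.mem_sdiff.mp hβ
    have hout : sRefl γ β ∉ P := by
      intro hmem
      exact hβP' (Finset.mem_image.mpr ⟨sRefl γ β, hmem, sRefl_sRefl γ β⟩)
    exact posPair Φ hnz hneg hrefl hcrys hP hγ hβP hout
  have hγD : γ ∈ D := by
    refine Finset.mem_sdiff.mpr ⟨hγ, ?_⟩
    intro hmem
    have h1 : sRefl γ γ ∈ P := mem_image_inv (sRefl γ) (sRefl γ) (sRefl_sRefl γ) P γ hmem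
    rw [sRefl_self γ hγ0] at h1
    exact (hP.2.1 γ hγΦ).mp hγ h1
  -- the sdiff swap identity
  have hswap : P' \ P = D.image (fun x => -x) := by
    ext δ
    simp only [Finset.mem_sdiff, Finset.mem_image, hD]
    constructor
    · rintro ⟨hδP', hδP⟩
      have hδΦ : δ ∈ Φ := hP'pos.1 hδP'
      refine ⟨-δ, ⟨?_, ?_⟩, neg_neg δ⟩
      · by_contra h
        exact hδP ((hP.2.1 δ hδΦ).mpr h)
      · intro hmem
        have h2 := (hP'pos.2.1 (-δ) (hneg δ hδΦ)).mp hmem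
        rw [neg_neg] at h2
        exact h2 hδP'
    · rintro ⟨β, ⟨hβP, hβP'⟩, rfl⟩
      have hβΦ : β ∈ Φ := hP.1 hβP
      constructor
      · by_contra h
        exact hβP' ((hP'pos.2.1 β hβΦ).mpr h)
      · intro hmem
        exact (hP.2.1 β hβΦ).mp hβP hmem
  -- sum decompositions
  have hA : σ = ∑ β ∈ P ∩ P', β + ∑ β ∈ D, β := by
    rw [hσ, hD, Finset.sum_inter_add_sum_sdiff]
  have hBsum : ∑ β ∈ P' \ P, β = - ∑ β ∈ D, β := by
    rw [hswap, Finset.sum_image (fun x _ y _ h => neg_injective h)]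
    exact Finset.sum_neg_distrib (fun x => x)
  have hB : sRefl γ σ = ∑ β ∈ P ∩ P', β - ∑ β ∈ D, β := by
    rw [← hσ']
    have := Finset.sum_inter_add_sum_sdiff P' P (fun β => β)
    rw [Finset.inter_comm] at this
    rw [← this, hBsum]
    abel
  have hsγ : ⟪sRefl γ σ, γ⟫_ℝ = -⟪σ, γ⟫_ℝ := by
    rw [sRefl_adjoint, sRefl_self γ hγ0, inner_neg_right]
  have hinner : ⟪σ, γ⟫_ℝ - ⟪sRefl γ σ, γ⟫_ℝ = 2 * ∑ β ∈ D, ⟪β, γ⟫_ℝ := by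
    rw [hB]
    nth_rewrite 1 [hA]
    rw [inner_add_left, inner_sub_left]
    simp only [sum_inner]
    ring
  have hDsum : 0 < ∑ β ∈ D, ⟪β, γ⟫_ℝ :=
    Finset.sum_pos hDpos ⟨γ, hγD⟩
  have : ⟪σ, γ⟫_ℝ = ∑ β ∈ D, ⟪β, γ⟫_ℝ := by
    rw [hsγ] at hinner
    linarith
  rw [real_inner_comm]
  rw [this]
  exact hDsum

end Reg


section WordHelpers
variable {l : ℕ}

lemma applyWord_mem_fin (Φ : Finset V) (Γ : Fin l → V) (hΓ : ∀ i, Γ i ∈ Φ)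
    (hrefl : ∀ α ∈ Φ, ∀ γ ∈ Φ, sRefl α γ ∈ Φ) :
    ∀ (w : List (Fin l)) (α : V), α ∈ Φ → applyWord Γ w α ∈ Φ := by
  intro w
  induction w with
  | nil => intro α h; exact h
  | cons i t ih =>
    intro α h
    rw [applyWord_cons]
    exact ih _ (hrefl (Γ i) (hΓ i) α h)

lemma isPosSystem_word [DecidableEq V] (Φ : Finset V) (Γ : Fin l → V)
    (hΓ : ∀ i, Γ i ∈ Φ) (hrefl : ∀ α ∈ Φ, ∀ γ ∈ Φ, sRefl α γ ∈ Φ)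
    {Q : Finset V} (hQ : IsPosSystem Φ Q) (w : List (Fin l)) :
    IsPosSystem Φ (Q.image (applyWord Γ w)) :=
  isPos_image Φ (applyWord Γ w) (applyWord Γ w.reverse)
    (applyWord_inv_reverse Γ w) (applyWord_reverse_inv Γ w)
    (applyWord_add Γ w) (applyWord_neg Γ w)
    (fun α hα => applyWord_mem_fin Φ Γ hΓ hrefl w α hα)
    (fun α hα => applyWord_mem_fin Φ Γ hΓ hrefl w.reverse α hα) hQ

lemma sum_image_word [DecidableEq V] (Γ : Fin l → V) (w : List (Fin l)) (Q : Finset V) :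
    ∑ α ∈ Q.image (applyWord Γ w), α = applyWord Γ w (∑ α ∈ Q, α) :=
  sum_image_f (applyWord Γ w) (applyWord Γ w.reverse)
    (applyWord_inv_reverse Γ w) (applyWord_reverse_inv Γ w) (applyWord_add Γ w) Q

lemma image_sdiff_word [DecidableEq V] (K : Finset V) (Γ : Fin l → V)
    (hΓ : ∀ i, Γ i ∈ K) (hrefl : ∀ α ∈ K, ∀ γ ∈ K, sRefl α γ ∈ K)
    (Q : Finset V) (w : List (Fin l)) :
    (Q \ K).image (applyWord Γ w) = Q.image (applyWord Γ w) \ K := by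
  ext α
  simp only [Finset.mem_sdiff, Finset.mem_image]
  constructor
  · rintro ⟨a, ⟨haQ, haK⟩, rfl⟩
    refine ⟨⟨a, haQ, rfl⟩, fun hK => haK ?_⟩
    have h1 := applyWord_mem_fin K Γ hΓ hrefl w.reverse _ hK
    rwa [applyWord_reverse_inv] at h1
  · rintro ⟨⟨a, haQ, rfl⟩, hK⟩
    exact ⟨a, ⟨haQ, fun haK => hK (applyWord_mem_fin K Γ hΓ hrefl w a haK)⟩, rfl⟩

lemma us_mem_Pos_iff (R : RootBase V l) (α : V) :
    α ∈ R.Pos ↔ α ∈ R.Φ ∧ ∃ c : Fin l → ℕ, α = ∑ i, (c i : ℝ) • R.simple i := by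
  unfold RootBase.Pos
  exact @Finset.mem_filter _ _ (Classical.decPred _) _ _

lemma us_simple_mem_Pos (R : RootBase V l) (i : Fin l) : R.simple i ∈ R.Pos := by
  refine (us_mem_Pos_iff R _).mpr ⟨R.simple_mem i, fun j => if j = i then 1 else 0, ?_⟩
  have h : ∀ j : Fin l, (((if j = i then 1 else 0 : ℕ)) : ℝ) • R.simple j
      = if j = i then R.simple j else 0 := by
    intro j; split <;> simp
  rw [Finset.sum_congr rfl (fun j _ => h j), Finset.sum_ite_eq' Finset.univ i]
  simp

end WordHelpers

/-- The unitarily small convex hull of Salamanca-Riba and Vogan: let `ρn j` be the half sums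
of the noncompact roots of the `s` positive systems `Pg j` of `Δ(g,t_f)` containing the fixed
positive system `Rk.Pos` of the compact roots, and let
`U = conv(⋃_j W(k,t_f)·ρn j)`. Then `U` is a `W(k,t_f)`-invariant compact convex set
containing `0`, each `ρn j` lies in `U`, and `2ρn j ∉ U` whenever `ρn j ≠ 0`. -/
theorem usmall_convex_hull
    {V : Type*} [NormedAddCommGroup V] [InnerProductSpace ℝ V] [FiniteDimensional ℝ V]
    [DecidableEq V] {l : ℕ}
    (Rk : RootBase V l)
    (Φg : Finset V)
    (hΦg_sub : Rk.Φ ⊆ Φg)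
    (hΦg_nonzero : ∀ α ∈ Φg, α ≠ 0)
    (hΦg_neg : ∀ α ∈ Φg, -α ∈ Φg)
    (hΦg_refl : ∀ α ∈ Φg, ∀ γ ∈ Φg, sRefl α γ ∈ Φg)
    (hΦg_crystal : ∀ α ∈ Φg, ∀ γ ∈ Φg, ∃ n : ℤ, coPair γ α = (n : ℝ))
    (s : ℕ) (hs : 0 < s) (Pg : Fin s → Finset V)
    (hPg : ∀ j, IsPosSystem Φg (Pg j) ∧ Rk.Pos ⊆ Pg j)
    (hPgall : ∀ Q : Finset V, IsPosSystem Φg Q → Rk.Pos ⊆ Q → ∃ j, Q = Pg j)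
    (ρn : Fin s → V) (hρn : ∀ j, ρn j = (2⁻¹ : ℝ) • ∑ α ∈ Pg j \ Rk.Pos, α)
    (U : Set V)
    (hU : U = convexHull ℝ
      (⋃ j, {x : V | ∃ w : List (Fin l), x = applyWord Rk.simple w (ρn j)})) :
    Convex ℝ U ∧ IsCompact U ∧ (0 : V) ∈ U ∧
    (∀ w : List (Fin l), ∀ x ∈ U, applyWord Rk.simple w x ∈ U) ∧
    (∀ j, ρn j ∈ U) ∧
    (∀ j, ρn j ≠ 0 → (2 : ℝ) • ρn j ∉ U)  := by
  classical
  subst hU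
  set S : Set V :=
    ⋃ j, {x : V | ∃ w : List (Fin l), x = applyWord Rk.simple w (ρn j)} with hSdef
  have hΓk : ∀ i, Rk.simple i ∈ Rk.Φ := Rk.simple_mem
  have hΓg : ∀ i, Rk.simple i ∈ Φg := fun i => hΦg_sub (Rk.simple_mem i)
  have hPgsub : ∀ j, Pg j ⊆ Φg := fun j => (hPg j).1.1
  have hPossubK : Rk.Pos ⊆ Rk.Φ := fun α h => ((us_mem_Pos_iff Rk α).mp h).1
  have hsdiff : ∀ j, Pg j \ Rk.Pos = Pg j \ Rk.Φ := by
    intro j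
    ext α
    simp only [Finset.mem_sdiff]
    constructor
    · rintro ⟨hα, hna⟩
      refine ⟨hα, fun hαk => ?_⟩
      rcases Rk.pos_or_neg α hαk with ⟨c, hc⟩ | ⟨c, hc⟩
      · exact hna ((us_mem_Pos_iff Rk α).mpr ⟨hαk, c, hc⟩)
      · have hnegmem : -α ∈ Rk.Pos :=
          (us_mem_Pos_iff Rk (-α)).mpr ⟨Rk.neg_mem α hαk, c, by rw [hc, neg_neg]⟩
        have h1 : -α ∈ Pg j := (hPg j).2 hnegmem
        exact ((hPg j).1.2.1 α (hPgsub j hα)).mp hα h1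
    · rintro ⟨hα, hnk⟩
      exact ⟨hα, fun h => hnk (hPossubK h)⟩
  have hρn' : ∀ j, ρn j = (2⁻¹ : ℝ) • ∑ β ∈ Pg j \ Rk.Φ, β := fun j => by
    rw [hρn j, hsdiff j]
  have hvert : ∀ x ∈ S, ∃ Q : Finset V, IsPosSystem Φg Q ∧
      x = (2⁻¹ : ℝ) • ∑ β ∈ Q \ Rk.Φ, β := by
    intro x hx
    simp only [hSdef, Set.mem_iUnion, Set.mem_setOf_eq] at hx
    obtain ⟨j, w, rfl⟩ := hx
    refine ⟨(Pg j).image (applyWord Rk.simple w),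
      isPosSystem_word Φg Rk.simple hΓg hΦg_refl (hPg j).1 w, ?_⟩
    rw [hρn' j, applyWord_smul]
    congr 1
    rw [← image_sdiff_word Rk.Φ Rk.simple hΓk Rk.refl_mem (Pg j) w,
      sum_image_word Rk.simple w (Pg j \ Rk.Φ)]
  have hSfin : S.Finite := by
    apply Set.Finite.subset (Finset.finite_toSet
      (Φg.powerset.image (fun A => (2⁻¹ : ℝ) • ∑ α ∈ A, α)))
    intro x hx
    obtain ⟨Q, hQ, rfl⟩ := hvert x hx
    refine Finset.mem_coe.mpr (Finset.mem_image.mpr ⟨Q \ Rk.Φ, ?_, rfl⟩)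
    exact Finset.mem_powerset.mpr ((Finset.sdiff_subset).trans hQ.1)
  have hUconv : Convex ℝ (convexHull ℝ S) := convex_convexHull ℝ S
  have hUcomp : IsCompact (convexHull ℝ S) := hSfin.isCompact_convexHull ℝ
  have hSU : S ⊆ convexHull ℝ S := subset_convexHull ℝ S
  have hρnS : ∀ j, ρn j ∈ S := fun j => Set.mem_iUnion.mpr ⟨j, ⟨[], rfl⟩⟩
  have hinv : ∀ (w : List (Fin l)), ∀ x ∈ convexHull ℝ S,
      applyWord Rk.simple w x ∈ convexHull ℝ S := by
    intro w x hx
    have h1 : applyWord Rk.simple w x ∈ (wordL Rk.simple w) '' (convexHull ℝ S) :=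
      ⟨x, hx, wordL_apply _ _ _⟩
    rw [(wordL Rk.simple w).image_convexHull S] at h1
    refine convexHull_mono ?_ h1
    rintro y ⟨z, hz, rfl⟩
    simp only [hSdef, Set.mem_iUnion, Set.mem_setOf_eq] at hz ⊢
    obtain ⟨j, w', rfl⟩ := hz
    exact ⟨j, w' ++ w, by rw [applyWord_append, wordL_apply]⟩
  have regg : ∀ {P : Finset V}, IsPosSystem Φg P → ∀ {γ : V}, γ ∈ P →
      0 < ⟪γ, ∑ β ∈ P, β⟫_ℝ := by
    intro P hP γ hγ
    exact reg Φg hΦg_nonzero hΦg_neg hΦg_refl hΦg_crystal hP hγ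
  -- 0 ∈ U
  have hzero : (0 : V) ∈ convexHull ℝ S := by
    by_contra h0
    obtain ⟨f, u, hfa, hfu⟩ :=
      geometric_hahn_banach_closed_point hUconv hUcomp.isClosed h0
    have hu0 : u < 0 := by simpa using hfu
    have hflt : ∀ a ∈ convexHull ℝ S, f a < 0 := fun a ha => lt_trans (hfa a ha) hu0
    set lv : V := (InnerProductSpace.toDual ℝ V).symm f with hlv
    have hlv_app : ∀ x : V, ⟪lv, x⟫_ℝ = f x := fun x => InnerProductSpace.toDual_symm_apply
    set P0 := Pg ⟨0, hs⟩ with hP0def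
    have hP0 : IsPosSystem Φg P0 := (hPg _).1
    have hP0sup : Rk.Pos ⊆ P0 := (hPg _).2
    set σ0 : V := ∑ β ∈ P0, β with hσ0
    have hfinvals :
        {r : ℝ | ∃ w : List (Fin l), r = ⟪applyWord Rk.simple w σ0, lv⟫_ℝ}.Finite := by
      apply Set.Finite.subset (Finset.finite_toSet
        ((Φg.powerset.image (fun A => ∑ α ∈ A, α)).image (fun y => ⟪y, lv⟫_ℝ)))
      rintro r ⟨w, rfl⟩
      refine Finset.mem_coe.mpr (Finset.mem_image.mpr ⟨applyWord Rk.simple w σ0, ?_, rfl⟩)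
      refine Finset.mem_image.mpr ⟨P0.image (applyWord Rk.simple w), ?_, ?_⟩
      · refine Finset.mem_powerset.mpr fun α hα => ?_
        obtain ⟨a, ha, rfl⟩ := Finset.mem_image.mp hα
        exact applyWord_mem_fin Φg Rk.simple hΓg hΦg_refl w a (hP0.1 ha)
      · exact sum_image_word Rk.simple w P0
    have hne_vals : hfinvals.toFinset.Nonempty :=
      ⟨⟪σ0, lv⟫_ℝ, hfinvals.mem_toFinset.mpr ⟨[], rfl⟩⟩
    obtain ⟨w₀, hw₀⟩ := hfinvals.mem_toFinset.mp (hfinvals.toFinset.max'_mem hne_vals)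
    have hMax : ∀ w : List (Fin l),
        ⟪applyWord Rk.simple w σ0, lv⟫_ℝ ≤ hfinvals.toFinset.max' hne_vals :=
      fun w => hfinvals.toFinset.le_max' _ (hfinvals.mem_toFinset.mpr ⟨w, rfl⟩)
    set μ : V := applyWord Rk.simple w₀.reverse lv with hμ
    have hMμ : hfinvals.toFinset.max' hne_vals = ⟪σ0, μ⟫_ℝ := by
      rw [hw₀, applyWord_adjoint]
    have hdom : ∀ i, 0 ≤ ⟪Rk.simple i, μ⟫_ℝ := by
      intro i
      by_contra hi
      push_neg at hi
      have hb := hMax (i :: w₀)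
      have hgi0 : Rk.simple i ≠ 0 := Rk.nonzero _ (Rk.simple_mem i)
      have hgipos := inner_self_pos' hgi0
      have hΓiP0 : Rk.simple i ∈ P0 := hP0sup (us_simple_mem_Pos Rk i)
      have hσγ : 0 < ⟪σ0, Rk.simple i⟫_ℝ := by
        rw [real_inner_comm]
        exact regg hP0 hΓiP0
      rw [real_inner_comm μ (Rk.simple i)] at hi
      have hcop : coPair μ (Rk.simple i) < 0 := by
        unfold coPair
        exact div_neg_of_neg_of_pos (by linarith) hgipos
      have hc2 : ⟪applyWord Rk.simple (i :: w₀) σ0, lv⟫_ℝ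
          = ⟪σ0, μ⟫_ℝ - coPair μ (Rk.simple i) * ⟪σ0, Rk.simple i⟫_ℝ := by
        rw [applyWord_adjoint, List.reverse_cons, applyWord_append, ← hμ,
          applyWord_singleton]
        unfold sRefl
        rw [inner_sub_right, real_inner_smul_right]
      rw [hc2, hMμ] at hb
      nlinarith [mul_pos (neg_pos.mpr hcop) hσγ]
    have hdomP : ∀ β ∈ Rk.Pos, 0 ≤ ⟪β, μ⟫_ℝ := by
      intro β hβ
      obtain ⟨hβΦ, c, hc⟩ := (us_mem_Pos_iff Rk β).mp hβ
      rw [hc, sum_inner]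
      refine Finset.sum_nonneg fun i _ => ?_
      rw [real_inner_smul_left]
      exact mul_nonneg (Nat.cast_nonneg _) (hdom i)
    set Q : Finset V :=
        Φg.filter (fun α => 0 < ⟪α, μ⟫_ℝ ∨ (⟪α, μ⟫_ℝ = 0 ∧ α ∈ P0)) with hQdef
    have hQmem : ∀ α : V,
        α ∈ Q ↔ α ∈ Φg ∧ (0 < ⟪α, μ⟫_ℝ ∨ (⟪α, μ⟫_ℝ = 0 ∧ α ∈ P0)) := by
      intro α
      rw [hQdef]
      exact Finset.mem_filter
    have hQpos : IsPosSystem Φg Q := by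
      refine ⟨fun α h => ((hQmem α).mp h).1, ?_, ?_⟩
      · intro α hαΦ
        constructor
        · intro hm hneg'
          obtain ⟨-, hcm⟩ := (hQmem α).mp hm
          obtain ⟨-, hcn⟩ := (hQmem (-α)).mp hneg'
          rw [inner_neg_left] at hcn
          rcases hcm with h1 | ⟨h1, h1'⟩ <;> rcases hcn with h2 | ⟨h2, h2'⟩
          · linarith
          · linarith
          · linarith
          · exact (hP0.2.1 α hαΦ).mp h1' h2'
        · intro hn
          refine (hQmem α).mpr ⟨hαΦ, ?_⟩
          rcases lt_trichotomy ⟪α, μ⟫_ℝ 0 with hlt | heq | hgt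
          · exact absurd ((hQmem (-α)).mpr ⟨hΦg_neg α hαΦ,
              Or.inl (by rw [inner_neg_left]; linarith)⟩) hn
          · refine Or.inr ⟨heq, ?_⟩
            by_contra hnp
            have hna : -α ∈ P0 := by
              by_contra h
              exact hnp ((hP0.2.1 α hαΦ).mpr h)
            exact hn ((hQmem (-α)).mpr ⟨hΦg_neg α hαΦ,
              Or.inr ⟨by rw [inner_neg_left, heq, neg_zero], hna⟩⟩)
          · exact Or.inl hgt
      · intro α hα β hβ hsum
        obtain ⟨hαΦ, hαc⟩ := (hQmem α).mp hα
        obtain ⟨hβΦ, hβc⟩ := (hQmem β).mp hβ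
        refine (hQmem _).mpr ⟨hsum, ?_⟩
        rcases hαc with ha | ⟨ha0, haP⟩ <;> rcases hβc with hb | ⟨hb0, hbP⟩
        · exact Or.inl (by rw [inner_add_left]; linarith)
        · exact Or.inl (by rw [inner_add_left]; linarith)
        · exact Or.inl (by rw [inner_add_left]; linarith)
        · exact Or.inr ⟨by rw [inner_add_left, ha0, hb0, add_zero],
            hP0.2.2 α haP β hbP hsum⟩
    have hQsup : Rk.Pos ⊆ Q := by
      intro β hβ
      refine (hQmem β).mpr ⟨hΦg_sub (hPossubK hβ), ?_⟩
      rcases eq_or_lt_of_le (hdomP β hβ) with h | h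
      · exact Or.inr ⟨h.symm, hP0sup hβ⟩
      · exact Or.inl h
    obtain ⟨j, hj⟩ := hPgall Q hQpos hQsup
    have hρμ : 0 ≤ ⟪ρn j, μ⟫_ℝ := by
      rw [hρn j, real_inner_smul_left, sum_inner]
      refine mul_nonneg (by norm_num) (Finset.sum_nonneg fun β hβ => ?_)
      have hβQ : β ∈ Q := by
        rw [hj]
        exact (Finset.sdiff_subset) hβ
      obtain ⟨-, hc⟩ := (hQmem β).mp hβQ
      rcases hc with h | ⟨h, -⟩
      · exact le_of_lt h
      · exact le_of_eq h.symm
    have hxU : applyWord Rk.simple w₀ (ρn j) ∈ convexHull ℝ S :=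
      hSU (Set.mem_iUnion.mpr ⟨j, ⟨w₀, rfl⟩⟩)
    have hlt : f (applyWord Rk.simple w₀ (ρn j)) < 0 := hflt _ hxU
    rw [← hlv_app] at hlt
    have heqv : ⟪ρn j, μ⟫_ℝ = ⟪lv, applyWord Rk.simple w₀ (ρn j)⟫_ℝ := by
      rw [hμ, applyWord_adjoint' Rk.simple w₀.reverse (ρn j) lv, List.reverse_reverse]
      exact real_inner_comm _ _
    rw [heqv] at hρμ
    linarith
  refine ⟨hUconv, hUcomp, hzero, hinv, fun j => hSU (hρnS j), ?_⟩
  -- 2 ρn ∉ U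
  intro j hne hmem
  set σ : V := ∑ β ∈ Pg j, β with hσdef
  set T : Finset V := Pg j \ Rk.Φ with hTdef
  have hkey : ∀ Q : Finset V, IsPosSystem Φg Q →
      ∑ β ∈ Q \ Rk.Φ, ⟪β, σ⟫_ℝ ≤ ∑ β ∈ T, ⟪β, σ⟫_ℝ := by
    intro Q hQ
    set S' : Finset V := Q \ Rk.Φ with hS'def
    have hswap : S' \ T = (T \ S').image (fun x => -x) := by
      ext δ
      simp only [Finset.mem_sdiff, Finset.mem_image, hS'def, hTdef]
      constructor
      · rintro ⟨⟨hδQ, hδK⟩, hδT⟩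
        have hδΦg : δ ∈ Φg := hQ.1 hδQ
        have hδPg : δ ∉ Pg j := fun h => hδT ⟨h, hδK⟩
        have hnδPg : -δ ∈ Pg j := by
          by_contra h
          exact hδPg (((hPg j).1.2.1 δ hδΦg).mpr h)
        have hnδK : -δ ∉ Rk.Φ := by
          intro h
          have := Rk.neg_mem _ h
          rw [neg_neg] at this
          exact hδK this
        refine ⟨-δ, ⟨⟨hnδPg, hnδK⟩, fun hc => ?_⟩, neg_neg δ⟩
        exact (hQ.2.1 δ hδΦg).mp hδQ hc.1
      · rintro ⟨β, ⟨⟨hβPg, hβK⟩, hβS'⟩, rfl⟩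
        have hβΦg : β ∈ Φg := hPgsub j hβPg
        have hnβK : -β ∉ Rk.Φ := by
          intro h
          have := Rk.neg_mem _ h
          rw [neg_neg] at this
          exact hβK this
        have hβQ : β ∉ Q := fun h => hβS' ⟨h, hβK⟩
        have hnβQ : -β ∈ Q := by
          by_contra h
          exact hβQ ((hQ.2.1 β hβΦg).mpr h)
        refine ⟨⟨hnβQ, hnβK⟩, fun hc => ?_⟩
        exact ((hPg j).1.2.1 β hβΦg).mp hβPg hc.1
    have h1 := Finset.sum_inter_add_sum_sdiff T S' (fun β => ⟪β, σ⟫_ℝ)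
    have h2 := Finset.sum_inter_add_sum_sdiff S' T (fun β => ⟪β, σ⟫_ℝ)
    have h3 : ∑ β ∈ S' \ T, ⟪β, σ⟫_ℝ = - ∑ β ∈ T \ S', ⟪β, σ⟫_ℝ := by
      rw [hswap, Finset.sum_image (fun x _ y _ h => neg_injective h)]
      simp [inner_neg_left]
    have h4 : ∑ β ∈ S' ∩ T, ⟪β, σ⟫_ℝ = ∑ β ∈ T ∩ S', ⟪β, σ⟫_ℝ := by
      rw [Finset.inter_comm]
    have h5 : 0 ≤ ∑ β ∈ T \ S', ⟪β, σ⟫_ℝ := by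
      refine Finset.sum_nonneg fun β hβ => ?_
      have hβT : β ∈ T := (Finset.sdiff_subset) hβ
      have hβPg : β ∈ Pg j := by
        rw [hTdef] at hβT
        exact (Finset.sdiff_subset) hβT
      exact le_of_lt (regg (hPg j).1 hβPg)
    linarith
  have hhalf : ∀ x ∈ convexHull ℝ S, ⟪x, σ⟫_ℝ ≤ ⟪ρn j, σ⟫_ℝ := by
    have hcx : Convex ℝ {x : V | ⟪x, σ⟫_ℝ ≤ ⟪ρn j, σ⟫_ℝ} :=
      convex_halfSpace_le ⟨fun a b => inner_add_left a b σ,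
        fun c a => real_inner_smul_left a σ c⟩ _
    have hsub : S ⊆ {x : V | ⟪x, σ⟫_ℝ ≤ ⟪ρn j, σ⟫_ℝ} := by
      intro x hx
      obtain ⟨Q, hQ, rfl⟩ := hvert x hx
      have := hkey Q hQ
      simp only [Set.mem_setOf_eq]
      rw [hρn' j, real_inner_smul_left, real_inner_smul_left, sum_inner, sum_inner]
      have h2 : (0:ℝ) ≤ 2⁻¹ := by norm_num
      exact mul_le_mul_of_nonneg_left this h2
    exact fun x hx => convexHull_min hsub hcx hx
  have hTne : T.Nonempty := by
    rw [Finset.nonempty_iff_ne_empty]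
    intro hT
    apply hne
    rw [hρn' j, ← hTdef, hT]
    simp
  have hpos : 0 < ⟪ρn j, σ⟫_ℝ := by
    rw [hρn' j, real_inner_smul_left, sum_inner]
    refine mul_pos (by norm_num) (Finset.sum_pos (fun β hβ => ?_) hTne)
    have hβPg : β ∈ Pg j := (Finset.sdiff_subset) hβ
    exact regg (hPg j).1 hβPg
  have h2ρ : ⟪(2:ℝ) • ρn j, σ⟫_ℝ ≤ ⟪ρn j, σ⟫_ℝ := hhalf _ hmem
  rw [real_inner_smul_left] at h2ρ
  linarith
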